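/- Suppose R = C(M) + E where C(M) = M·λ_k(β)_a⃗ with M ∈ F^(s×k) and E ∈ F^(s×n) has sum-rank weight t satisfying (s+1)·t < s·(n − k + 1). Let D := ⌈(n + s(k−1) + 1)/(s+1)⌉ and let (Q_0, Q_1, …, Q_s) be a nonzero tuple with Q_0 ∈ F^D and Q_l ∈ F^(D−k+1) for 1 ≤ l ≤ s satisfying the interpolation conditions for R. Then, with f^(l) ∈ F^k the l-th row of M, the skew polynomial P := Q_0 + Σ_(l=1)^s Q_l ∗ f^(l) is identically zero (every coefficient of P vanishes). -/

import Mathlib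

/-!
By the interpolation conditions, `P = Q_0 + Σ_l Q_l ∗ f^(l)` satisfies
`P(β_j)_{a_i} = -Σ_l Q_l(e_{l,j})_{a_i}` at every code locator. So on block `i` the skew
polynomial `P` vanishes on the `GF(q)`-space of combinations of the `β^(i)_j` whose error columns
cancel, which has dimension `n_i - rk_q(E^(i))`: the root spaces of `P` have total dimension
`n - t`. A nonzero skew polynomial with `D` coefficients has root spaces of total dimension less
than `D` with respect to pairwise non-conjugate evaluation parameters, while the choice of `D` and
`(s+1) t < s (n-k+1)` give `D ≤ n - t`. Hence `P = 0`.
-/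

namespace Stmt13

/-- `genNorm σ a i = σ^(i-1)(a) ⋯ σ(a) · a`, the generalized power function `N_i(a)`. -/
def genNorm {F : Type} [Field F] (σ : F ≃+* F) (a : F) : ℕ → F
  | 0 => 1
  | i + 1 => (⇑σ)^[i] a * genNorm σ a i

/-- Generalized operator `D_a^i(b) = σ^i(b) · N_i(a)` for `i ∈ ℕ`. -/
def opev {F : Type} [Field F] (σ : F ≃+* F) (a b : F) (i : ℕ) : F :=
  (⇑σ)^[i] b * genNorm σ a i

/-- `b` is σ-conjugate to `a`, i.e. `b = σ(c)·a·c⁻¹` for some nonzero `c`. -/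
def SConj {F : Type} [Field F] (σ : F ≃+* F) (a b : F) : Prop :=
  ∃ c : F, c ≠ 0 ∧ b = σ c * a * c⁻¹

/-- σ-generalized Moore matrix `λ_d(x)_a⃗` w.r.t. the length partition `nn`:
its row `r` applies `D_{a_i}^r` entrywise to the `i`-th block of `x`. -/
def moore {F : Type} [Field F] (σ : F ≃+* F) {ℓ : ℕ} (nn : Fin ℓ → ℕ) (aa : Fin ℓ → F)
    (d : ℕ) (x : (Σ i : Fin ℓ, Fin (nn i)) → F) :
    Matrix (Fin d) (Σ i : Fin ℓ, Fin (nn i)) F :=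
  Matrix.of fun r p => opev σ (aa p.1) (x p) (r : ℕ)

/-- `λ_d(X)_a⃗` for a matrix `X`: the stack of `λ_d(x_j)_a⃗` over the rows of `X`. -/
def mooreMat {F : Type} [Field F] (σ : F ≃+* F) {ℓ : ℕ} (nn : Fin ℓ → ℕ) (aa : Fin ℓ → F)
    {s : ℕ} (d : ℕ) (X : Matrix (Fin s) (Σ i : Fin ℓ, Fin (nn i)) F) :
    Matrix (Fin s × Fin d) (Σ i : Fin ℓ, Fin (nn i)) F :=
  Matrix.of fun r p => opev σ (aa p.1) (X r.1 p) (r.2 : ℕ)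

/-- `rk_q` of a vector: the `K`-dimension of the `K`-span of its entries. -/
noncomputable def rkq (K : Type) [Field K] {F : Type} [Field F] [Algebra K F] {ι : Type}
    (v : ι → F) : ℕ :=
  Module.finrank K (Submodule.span K (Set.range v))

/-- `rk_q` of a matrix: the `K`-dimension of the `K`-span of its columns. -/
noncomputable def rkqMat (K : Type) [Field K] {F : Type} [Field F] [Algebra K F]
    {s : ℕ} {ι : Type} (X : Matrix (Fin s) ι F) : ℕ :=
  Module.finrank K (Submodule.span K (Set.range fun j : ι => fun r : Fin s => X r j))

/-- Sum-rank weight of a blockwise vector. -/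
noncomputable def wtV (K : Type) [Field K] {F : Type} [Field F] [Algebra K F] {ℓ : ℕ}
    (nn : Fin ℓ → ℕ) (x : (Σ i : Fin ℓ, Fin (nn i)) → F) : ℕ :=
  ∑ i, rkq K fun μ : Fin (nn i) => x ⟨i, μ⟩

/-- Sum-rank weight of a blockwise matrix. -/
noncomputable def wtM (K : Type) [Field K] {F : Type} [Field F] [Algebra K F] {s ℓ : ℕ}
    (nn : Fin ℓ → ℕ) (X : Matrix (Fin s) (Σ i : Fin ℓ, Fin (nn i)) F) : ℕ :=
  ∑ i, rkqMat K (Matrix.of fun (r : Fin s) (μ : Fin (nn i)) => X r ⟨i, μ⟩)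

/-- Codeword `C(M) = M · λ_k(β)_a⃗` of the `s`-interleaved linearized Reed–Solomon code. -/
def codeword {F : Type} [Field F] (σ : F ≃+* F) {ℓ : ℕ} (nn : Fin ℓ → ℕ) (aa : Fin ℓ → F)
    (β : (Σ i : Fin ℓ, Fin (nn i)) → F) {s : ℕ} (k : ℕ) (M : Matrix (Fin s) (Fin k) F) :
    Matrix (Fin s) (Σ i : Fin ℓ, Fin (nn i)) F :=
  M * moore σ nn aa k β

/-- A coefficient vector as a finitely supported coefficient sequence. -/
noncomputable def ofVec {F : Type} [Field F] {d : ℕ} (v : Fin d → F) : ℕ →₀ F :=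
  ∑ u : Fin d, Finsupp.single (u : ℕ) (v u)

/-- Generalized operator evaluation `g(b)_a = Σ_u g_u · σ^u(b) · N_u(a)` of a skew
polynomial (finitely supported coefficient sequence). -/
noncomputable def evalOp {F : Type} [Field F] (σ : F ≃+* F) (g : ℕ →₀ F) (a b : F) : F :=
  g.sum fun u c => c * opev σ a b u

/-- Skew product of coefficient sequences: `(g ∗ h)_w = Σ_{u+v=w} g_u · σ^u(h_v)`. -/
noncomputable def skewMulF {F : Type} [Field F] (σ : F ≃+* F) (g h : ℕ →₀ F) : ℕ →₀ F :=
  g.sum fun u cu => h.sum fun v cv => Finsupp.single (u + v) (cu * (⇑σ)^[u] cv)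

open Module

section Evaluation

variable {F : Type} [Field F] (σ : F ≃+* F)

lemma genNorm_add (a : F) (u v : ℕ) :
    genNorm σ a (u + v) = (⇑σ)^[u] (genNorm σ a v) * genNorm σ a u := by
  induction v with
  | zero => simp [genNorm]
  | succ v ih =>
    rw [← add_assoc, genNorm, genNorm, ih, iterate_map_mul, ← Function.iterate_add_apply]
    ring

lemma opev_zero (a b : F) : opev σ a b 0 = b := by
  simp [opev, genNorm]

lemma opev_add (a x y : F) (u : ℕ) : opev σ a (x + y) u = opev σ a x u + opev σ a y u := by
  simp [opev, iterate_map_add, add_mul]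

lemma opev_sum {ι : Type*} (t : Finset ι) (x : ι → F) (a : F) (u : ℕ) :
    opev σ a (∑ j ∈ t, x j) u = ∑ j ∈ t, opev σ a (x j) u := by
  rw [opev, ← RingHom.coe_coe σ, ← RingHom.coe_pow, map_sum, Finset.sum_mul]
  rfl

lemma evalOp_single (u : ℕ) (c a b : F) :
    evalOp σ (Finsupp.single u c) a b = c * opev σ a b u := by
  simp [evalOp]

lemma evalOp_add_left (g h : ℕ →₀ F) (a b : F) :
    evalOp σ (g + h) a b = evalOp σ g a b + evalOp σ h a b :=
  Finsupp.sum_add_index' (fun _ => zero_mul _) fun _ _ _ => add_mul _ _ _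

lemma evalOp_sum_left {ι : Type*} (t : Finset ι) (g : ι → ℕ →₀ F) (a b : F) :
    evalOp σ (∑ i ∈ t, g i) a b = ∑ i ∈ t, evalOp σ (g i) a b :=
  (Finsupp.sum_finsetSum_index (fun _ => zero_mul _) fun _ _ _ => add_mul _ _ _).symm

lemma evalOp_add_right (g : ℕ →₀ F) (a x y : F) :
    evalOp σ g a (x + y) = evalOp σ g a x + evalOp σ g a y := by
  simp only [evalOp, opev_add, mul_add, Finsupp.sum_add]

lemma evalOp_zero_right (g : ℕ →₀ F) (a : F) : evalOp σ g a 0 = 0 := by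
  simp [evalOp, opev]

lemma evalOp_ofVec {d : ℕ} (v : Fin d → F) (a b : F) :
    evalOp σ (ofVec v) a b = ∑ u : Fin d, v u * opev σ a b u := by
  simp only [ofVec, evalOp_sum_left, evalOp_single]

lemma evalOp_skewMulF (g h : ℕ →₀ F) (a b : F) :
    evalOp σ (skewMulF σ g h) a b = evalOp σ g a (evalOp σ h a b) := by
  simp only [skewMulF, Finsupp.sum, evalOp_sum_left, evalOp_single]
  refine Finset.sum_congr rfl fun u _ => ?_
  simp only [evalOp, Finsupp.sum, opev_sum, Finset.mul_sum]
  refine Finset.sum_congr rfl fun v _ => ?_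
  simp only [opev, iterate_map_mul, genNorm_add, Function.iterate_add_apply]
  ring

lemma evalOp_add_sum_skewMulF {ι : Type*} (t : Finset ι) (g₀ : ℕ →₀ F) (g h : ι → ℕ →₀ F)
    (a b : F) :
    evalOp σ (g₀ + ∑ i ∈ t, skewMulF σ (g i) (h i)) a b
      = evalOp σ g₀ a b + ∑ i ∈ t, evalOp σ (g i) a (evalOp σ (h i) a b) := by
  simp only [evalOp_add_left, evalOp_sum_left, evalOp_skewMulF]

end Evaluation

section LinearEvaluation

variable {K F : Type} [Field K] [Field F] [Algebra K F] (σ : F ≃+* F)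
  (hσ : ∀ κ : K, σ (algebraMap K F κ) = algebraMap K F κ)

include hσ in
lemma opev_smul (a : F) (κ : K) (x : F) (u : ℕ) : opev σ a (κ • x) u = κ • opev σ a x u := by
  have hσu : (⇑σ)^[u] (algebraMap K F κ) = algebraMap K F κ :=
    Function.iterate_fixed (hσ κ) u
  simp only [opev, Algebra.smul_def, iterate_map_mul, hσu, mul_assoc]

noncomputable def evalOpₗ (g : ℕ →₀ F) (a : F) : F →ₗ[K] F where
  toFun b := evalOp σ g a b
  map_add' := evalOp_add_right σ g a
  map_smul' κ x := by
    simp only [evalOp, opev_smul σ hσ, mul_smul_comm, Finsupp.smul_sum, RingHom.id_apply]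

@[simp] lemma evalOpₗ_apply (g : ℕ →₀ F) (a b : F) : evalOpₗ σ hσ g a b = evalOp σ g a b := rfl

end LinearEvaluation

section SkewProduct

variable {F : Type} [Field F] (σ : F ≃+* F)

lemma ofVec_apply_of_le {d : ℕ} (v : Fin d → F) {u : ℕ} (hu : d ≤ u) : ofVec v u = 0 := by
  rw [ofVec, Finset.sum_apply']
  exact Finset.sum_eq_zero fun w _ => Finsupp.single_eq_of_ne (by omega)

lemma skewMulF_apply_of_lt {g h : ℕ →₀ F} {dg dh : ℕ} (hg : ∀ u, dg < u → g u = 0)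
    (hh : ∀ v, dh < v → h v = 0) {w : ℕ} (hw : dg + dh < w) : skewMulF σ g h w = 0 := by
  simp only [skewMulF, Finsupp.sum, Finset.sum_apply']
  refine Finset.sum_eq_zero fun u hu => Finset.sum_eq_zero fun v hv => Finsupp.single_eq_of_ne ?_
  have := (Finsupp.mem_support_iff.mp hu).imp_symm (hg u ∘ lt_of_not_ge)
  have := (Finsupp.mem_support_iff.mp hv).imp_symm (hh v ∘ lt_of_not_ge)
  omega

@[simp] lemma skewMulF_zero_left (h : ℕ →₀ F) : skewMulF σ 0 h = 0 := by
  simp [skewMulF]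

lemma skewMulF_add_left (g₁ g₂ h : ℕ →₀ F) :
    skewMulF σ (g₁ + g₂) h = skewMulF σ g₁ h + skewMulF σ g₂ h :=
  Finsupp.sum_add_index' (fun _ => by simp) fun _ _ _ => by
    simp only [add_mul, Finsupp.single_add, Finsupp.sum_add]

lemma skewMulF_add_right (g h₁ h₂ : ℕ →₀ F) :
    skewMulF σ g (h₁ + h₂) = skewMulF σ g h₁ + skewMulF σ g h₂ := by
  simp only [skewMulF, ← Finsupp.sum_add]
  refine Finsupp.sum_congr fun u _ => Finsupp.sum_add_index' (fun _ => by simp) fun _ _ _ => ?_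
  simp only [iterate_map_add, mul_add, Finsupp.single_add]

lemma skewMulF_single_single (u v : ℕ) (c c' : F) :
    skewMulF σ (Finsupp.single u c) (Finsupp.single v c')
      = Finsupp.single (u + v) (c * (⇑σ)^[u] c') := by
  simp [skewMulF]

noncomputable def skewXSubC (γ : F) : ℕ →₀ F :=
  Finsupp.single 1 1 + Finsupp.single 0 (-γ)

lemma evalOp_skewXSubC (γ a b : F) : evalOp σ (skewXSubC γ) a b = σ b * a - γ * b := by
  rw [skewXSubC, evalOp_add_left, evalOp_single, evalOp_single, opev_zero]
  simp [opev, genNorm]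
  ring

lemma skewMulF_single_skewXSubC (u : ℕ) (c γ : F) :
    skewMulF σ (Finsupp.single u c) (skewXSubC γ)
      = Finsupp.single (u + 1) c + Finsupp.single u (-(c * (⇑σ)^[u] γ)) := by
  rw [skewXSubC, skewMulF_add_right, skewMulF_single_single, skewMulF_single_single]
  simp only [iterate_map_one, iterate_map_neg, mul_one, mul_neg, add_zero]

lemma exists_eq_skewMulF_skewXSubC_add (γ : F) (d : ℕ) (P : ℕ →₀ F)
    (hP : ∀ u, d < u → P u = 0) :
    ∃ g : ℕ →₀ F, ∃ r : F, (∀ u, d ≤ u → g u = 0) ∧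
      P = skewMulF σ g (skewXSubC γ) + Finsupp.single 0 r := by
  induction d generalizing P with
  | zero =>
    refine ⟨0, P 0, fun u _ => rfl, ?_⟩
    ext u
    rcases Nat.eq_zero_or_pos u with rfl | hu
    · simp
    · simp [hP u hu, Finsupp.single_eq_of_ne hu.ne']
  | succ d ih =>
    set c := P (d + 1)
    obtain ⟨g, r, hg, hPg⟩ :=
      ih (P - skewMulF σ (Finsupp.single d c) (skewXSubC γ)) fun u hu => by
        rw [skewMulF_single_skewXSubC]
        rcases (Nat.succ_le_of_lt hu).eq_or_lt with rfl | hu'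
        · simp [c]
        · simp [hP u hu', Finsupp.single_eq_of_ne hu'.ne', Finsupp.single_eq_of_ne hu.ne']
    refine ⟨g + Finsupp.single d c, r, fun u hu => ?_, ?_⟩
    · simp [hg u (by omega), Finsupp.single_eq_of_ne (by omega : u ≠ d)]
    · rw [skewMulF_add_left, ← sub_eq_iff_eq_add'.mpr hPg]
      abel

lemma exists_eq_skewMulF_skewXSubC (d : ℕ) (P : ℕ →₀ F) (hP : ∀ u, d < u → P u = 0)
    {a b : F} (hb : b ≠ 0) (hPb : evalOp σ P a b = 0) :
    ∃ g : ℕ →₀ F, (∀ u, d ≤ u → g u = 0) ∧ P = skewMulF σ g (skewXSubC (σ b * a * b⁻¹)) := by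
  obtain ⟨g, r, hg, rfl⟩ := exists_eq_skewMulF_skewXSubC_add σ (σ b * a * b⁻¹) d P hP
  have hroot : evalOp σ (skewXSubC (σ b * a * b⁻¹)) a b = 0 := by
    rw [evalOp_skewXSubC]
    field_simp
    ring
  rw [evalOp_add_left, evalOp_skewMulF, hroot, evalOp_zero_right, evalOp_single, opev_zero,
    zero_add] at hPb
  obtain rfl : r = 0 := (mul_eq_zero.mp hPb).resolve_right hb
  exact ⟨g, hg, by simp⟩

lemma ofVec_add_sum_skewMulF_apply_of_le {s k D : ℕ} (hk : 1 ≤ k) (hkD : k ≤ D)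
    (Q₀ : Fin D → F) (Q : Fin s → Fin (D - k + 1) → F) (f : Fin s → Fin k → F) {u : ℕ}
    (hu : D ≤ u) : (ofVec Q₀ + ∑ l, skewMulF σ (ofVec (Q l)) (ofVec (f l))) u = 0 := by
  rw [Finsupp.add_apply, ofVec_apply_of_le Q₀ hu, zero_add, Finset.sum_apply']
  exact Finset.sum_eq_zero fun l _ => skewMulF_apply_of_lt σ (dg := D - k) (dh := k - 1)
    (fun v hv => ofVec_apply_of_le _ (by omega)) (fun v hv => ofVec_apply_of_le _ (by omega))
    (by omega)

end SkewProduct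

section RootSpaces

variable {K F : Type} [Field K] [Field F] [Algebra K F] (σ : F ≃+* F)

lemma SConj.symm {a b : F} (h : SConj σ a b) : SConj σ b a := by
  obtain ⟨c, hc, rfl⟩ := h
  have hσc : σ c ≠ 0 := (map_ne_zero σ).mpr hc
  refine ⟨c⁻¹, inv_ne_zero hc, ?_⟩
  rw [map_inv₀]
  field_simp

lemma SConj.trans {a b c : F} (hab : SConj σ a b) (hbc : SConj σ b c) : SConj σ a c := by
  obtain ⟨x, hx, rfl⟩ := hab
  obtain ⟨y, hy, rfl⟩ := hbc
  exact ⟨y * x, mul_ne_zero hy hx, by rw [map_mul, mul_inv]; ring⟩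

lemma SConj.of_evalOp_skewXSubC_eq_zero {a γ x : F} (hx : x ≠ 0)
    (h : evalOp σ (skewXSubC γ) a x = 0) : SConj σ a γ := by
  rw [evalOp_skewXSubC, sub_eq_zero] at h
  exact ⟨x, hx, by rw [h]; field_simp⟩

/-- Two nonzero roots `x, y` of `X - γ` w.r.t. `a ≠ 0` have a `σ`-fixed quotient `x / y`, which
therefore lies in `K`. -/
lemma finrank_ker_evalOpₗ_skewXSubC_le_one (hσ : ∀ κ : K, σ (algebraMap K F κ) = algebraMap K F κ)
    (hfix : ∀ x : F, σ x = x → x ∈ Set.range (algebraMap K F)) {a : F} (ha : a ≠ 0) (γ : F) :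
    finrank K (LinearMap.ker (evalOpₗ σ hσ (skewXSubC γ) a)) ≤ 1 := by
  set L := LinearMap.ker (evalOpₗ σ hσ (skewXSubC γ) a)
  have hroot : ∀ x ∈ L, σ x * a = γ * x := fun x hx => by
    rw [LinearMap.mem_ker, evalOpₗ_apply, evalOp_skewXSubC, sub_eq_zero] at hx
    exact hx
  rcases eq_or_ne L ⊥ with hL | hL
  · rw [hL, finrank_bot]
    exact zero_le_one
  obtain ⟨y, hy, hy0⟩ := (Submodule.ne_bot_iff L).mp hL
  refine finrank_le_one ⟨y, hy⟩ fun ⟨x, hx⟩ => ?_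
  have hσy : σ y ≠ 0 := (map_ne_zero σ).mpr hy0
  have hxy : σ x * y = x * σ y := mul_right_cancel₀ ha <| by
    linear_combination y * hroot x hx - x * hroot y hy
  obtain ⟨κ, hκ⟩ := hfix (x / y) <| by
    rw [map_div₀, div_eq_div_iff hσy hy0]
    exact hxy
  exact ⟨κ, Subtype.ext <| by
    simp only [SetLike.mk_smul_mk, Algebra.smul_def, hκ]
    field_simp⟩

lemma finrank_le_finrank_map_add_finrank_ker {M N : Type*} [AddCommGroup M] [Module K M]
    [AddCommGroup N] [Module K N] [FiniteDimensional K M] (f : M →ₗ[K] N) (V : Submodule K M) :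
    finrank K V ≤ finrank K (V.map f) + finrank K (LinearMap.ker f) := by
  have hrank := LinearMap.finrank_range_add_finrank_ker (f.domRestrict V)
  rw [LinearMap.range_domRestrict, LinearMap.ker_domRestrict] at hrank
  have hker : finrank K ((LinearMap.ker f).comap V.subtype) ≤ finrank K (LinearMap.ker f) :=
    calc finrank K ((LinearMap.ker f).comap V.subtype)
        = finrank K (((LinearMap.ker f).comap V.subtype).map V.subtype) :=
          (Submodule.finrank_map_subtype_eq _ _).symm
      _ ≤ finrank K (LinearMap.ker f) := Submodule.finrank_mono (Submodule.map_comap_le _ _)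
  omega

/-- Induction on `d`: dividing by the factor `X - γ` given by one root `b` shrinks only the root
space containing `b`, and only by one dimension, because `X - γ` has roots w.r.t. `a` only if `a`
is conjugate to `γ`. -/
theorem sum_finrank_lt_of_evalOp_eq_zero [FiniteDimensional K F]
    (hfix : ∀ x : F, σ x = x ↔ x ∈ Set.range (algebraMap K F)) {ι : Type*} [Fintype ι]
    {a : ι → F} (ha : ∀ i, a i ≠ 0) (hconj : Pairwise fun i j => ¬ SConj σ (a i) (a j))
    (d : ℕ) (P : ℕ →₀ F) (hP : ∀ u, d ≤ u → P u = 0) (hP0 : P ≠ 0) (V : ι → Submodule K F)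
    (hV : ∀ i, ∀ b ∈ V i, evalOp σ P (a i) b = 0) :
    ∑ i, finrank K (V i) < d := by
  have hσ : ∀ κ : K, σ (algebraMap K F κ) = algebraMap K F κ := fun κ => (hfix _).mpr ⟨κ, rfl⟩
  induction d generalizing P V with
  | zero => exact absurd (Finsupp.ext fun u => hP u u.zero_le) hP0
  | succ d ih =>
    by_cases hV0 : ∀ i, V i = ⊥
    · rw [Finset.sum_eq_zero fun i _ => by rw [hV0 i, finrank_bot]]
      omega
    obtain ⟨i₀, hi₀⟩ := not_forall.mp hV0
    obtain ⟨b, hb, hb0⟩ := (Submodule.ne_bot_iff _).mp hi₀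
    obtain ⟨g, hg, rfl⟩ := exists_eq_skewMulF_skewXSubC σ d P hP hb0 (hV i₀ b hb)
    set f := fun i => evalOpₗ σ hσ (skewXSubC (σ b * a i₀ * b⁻¹)) (a i)
    have hg0 : g ≠ 0 := by
      rintro rfl
      simp at hP0
    have hgV : ∀ i, ∀ y ∈ (V i).map (f i), evalOp σ g (a i) y = 0 := by
      rintro i _ ⟨x, hx, rfl⟩
      simpa [f, evalOp_skewMulF] using hV i x hx
    have hconjγ : SConj σ (a i₀) (σ b * a i₀ * b⁻¹) := ⟨b, hb0, rfl⟩
    have hker : ∀ i, i ≠ i₀ → LinearMap.ker (f i) = ⊥ := fun i hi => by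
      refine (Submodule.eq_bot_iff _).mpr fun x hx => by_contra fun hx0 => hconj hi ?_
      exact (SConj.of_evalOp_skewXSubC_eq_zero σ hx0 hx).trans σ (hconjγ.symm σ)
    calc ∑ i, finrank K (V i)
        ≤ ∑ i, (finrank K ((V i).map (f i)) + finrank K (LinearMap.ker (f i))) :=
          Finset.sum_le_sum fun i _ => finrank_le_finrank_map_add_finrank_ker _ _
      _ = ∑ i, finrank K ((V i).map (f i)) + finrank K (LinearMap.ker (f i₀)) := by
          rw [Finset.sum_add_distrib]
          congr 1
          exact Finset.sum_eq_single i₀ (fun i _ hi => by rw [hker i hi, finrank_bot]) (by simp)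
      _ < d + 1 :=
          add_lt_add_of_lt_of_le (ih g hg hg0 _ hgV)
            (finrank_ker_evalOpₗ_skewXSubC_le_one σ hσ (fun x => (hfix x).mp) (ha i₀) _)

end RootSpaces

section Decoding

variable {K F : Type} [Field K] [Field F] [Algebra K F]

lemma codeword_apply (σ : F ≃+* F) {ℓ : ℕ} (nn : Fin ℓ → ℕ) (aa : Fin ℓ → F)
    (β : (Σ i : Fin ℓ, Fin (nn i)) → F) {s : ℕ} (k : ℕ) (M : Matrix (Fin s) (Fin k) F)
    (l : Fin s) (p : Σ i : Fin ℓ, Fin (nn i)) :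
    codeword σ nn aa β k M l p = evalOp σ (ofVec (M l)) (aa p.1) (β p) := by
  rw [codeword, Matrix.mul_apply, evalOp_ofVec]
  rfl

/-- The witness is `{Σ x_μ β_μ | Σ x_μ e_μ = 0}`. -/
lemma exists_le_ker_finrank_add_finrank_span_eq_card {ι M W N : Type*} [Fintype ι]
    [AddCommGroup M] [Module K M] [AddCommGroup W] [Module K W] [AddCommGroup N] [Module K N]
    {β : ι → M} (hβ : LinearIndependent K β) (e : ι → W) (L : M →ₗ[K] N) (G : W →ₗ[K] N)
    (h : ∀ μ, L (β μ) = G (e μ)) :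
    ∃ V : Submodule K M, V ≤ LinearMap.ker L ∧
      finrank K V + finrank K (Submodule.span K (Set.range e)) = Fintype.card ι := by
  classical
  set φ := Fintype.linearCombination K β
  set ψ := Fintype.linearCombination K e
  have hLG : L ∘ₗ φ = G ∘ₗ ψ := LinearMap.pi_ext fun μ c => by
    simp [φ, ψ, Fintype.linearCombination_apply_single, h]
  refine ⟨(LinearMap.ker ψ).map φ, ?_, ?_⟩
  · rintro _ ⟨x, hx, rfl⟩
    rw [LinearMap.mem_ker, ← LinearMap.comp_apply, hLG, LinearMap.comp_apply,
      LinearMap.mem_ker.mp hx, map_zero]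
  · rw [← (Submodule.equivMapOfInjective φ hβ.fintypeLinearCombination_injective _).finrank_eq,
      ← Fintype.range_linearCombination, add_comm, LinearMap.finrank_range_add_finrank_ker,
      finrank_fintype_fun_eq_card]

lemma le_add_mul_pred_div {s k n : ℕ} (hk : 1 ≤ k) (hkn : k ≤ n) :
    k ≤ (n + s * (k - 1) + 1 + s) / (s + 1) := by
  obtain ⟨k, rfl⟩ : ∃ k', k = k' + 1 := ⟨k - 1, by omega⟩
  rw [Nat.le_div_iff_mul_le (by omega), Nat.add_sub_cancel]
  nlinarith

lemma add_mul_pred_div_add_le {s k n t : ℕ} (hk : 1 ≤ k) (hkn : k ≤ n)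
    (hdec : (s + 1) * t < s * (n - k + 1)) :
    (n + s * (k - 1) + 1 + s) / (s + 1) + t ≤ n := by
  obtain ⟨k, rfl⟩ : ∃ k', k = k' + 1 := ⟨k - 1, by omega⟩
  obtain ⟨m, rfl⟩ : ∃ m, n = k + 1 + m := ⟨n - (k + 1), by omega⟩
  have hdiv := Nat.div_mul_le_self (k + 1 + m + s * k + 1 + s) (s + 1)
  rw [Nat.add_sub_cancel] at *
  rw [show k + 1 + m - (k + 1) + 1 = m + 1 by omega] at hdec
  by_contra hlt
  nlinarith

end Decoding

theorem P_eq_zero_general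
    {K F : Type} [Field K] [Field F] [Algebra K F] [Fintype F]
    (σ : F ≃+* F)
    (hfix : ∀ x : F, σ x = x ↔ x ∈ Set.range (algebraMap K F))
    {ℓ : ℕ} (nn : Fin ℓ → ℕ) (aa : Fin ℓ → F)
    (ha0 : ∀ i, aa i ≠ 0)
    (haconj : ∀ i j : Fin ℓ, i ≠ j → ¬ SConj σ (aa i) (aa j))
    (β : (Σ i : Fin ℓ, Fin (nn i)) → F)
    (hβ : ∀ i, LinearIndependent K fun μ : Fin (nn i) => β ⟨i, μ⟩)
    {s : ℕ} {k n t : ℕ} (hn : n = ∑ i, nn i)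
    (hk : 1 ≤ k) (hkn : k ≤ n)
    (M : Matrix (Fin s) (Fin k) F)
    (E R : Matrix (Fin s) (Σ i : Fin ℓ, Fin (nn i)) F)
    (hR : R = codeword σ nn aa β k M + E)
    (ht : wtM K nn E = t)
    (hdec : (s + 1) * t < s * (n - k + 1))
    {D : ℕ} (hD : D = (n + s * (k - 1) + 1 + s) / (s + 1))
    (Q0 : Fin D → F) (Q : Fin s → Fin (D - k + 1) → F)
    (hint : ∀ p : Σ i : Fin ℓ, Fin (nn i),
      evalOp σ (ofVec Q0) (aa p.1) (β p)
        + ∑ l : Fin s, evalOp σ (ofVec (Q l)) (aa p.1) (R l p) = 0) :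
    ofVec Q0 + ∑ l : Fin s, skewMulF σ (ofVec (Q l)) (ofVec (M l)) = 0 := by
  have : FiniteDimensional K F := Module.Finite.of_finite
  have hσ : ∀ κ : K, σ (algebraMap K F κ) = algebraMap K F κ := fun κ => (hfix _).mpr ⟨κ, rfl⟩
  set P := ofVec Q0 + ∑ l : Fin s, skewMulF σ (ofVec (Q l)) (ofVec (M l))
  by_contra hP0
  have hkD : k ≤ D := hD ▸ le_add_mul_pred_div hk hkn
  have hPβ : ∀ p, evalOp σ P (aa p.1) (β p) = -∑ l, evalOp σ (ofVec (Q l)) (aa p.1) (E l p) :=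
    fun p => by
      have h := hint p
      simp only [hR, Matrix.add_apply, codeword_apply, evalOp_add_right,
        Finset.sum_add_distrib] at h
      rw [evalOp_add_sum_skewMulF]
      linear_combination h
  choose V hVP hVrank using fun i => exists_le_ker_finrank_add_finrank_span_eq_card (hβ i)
    (fun μ r => E r ⟨i, μ⟩) (evalOpₗ σ hσ P (aa i))
    (-∑ l, evalOpₗ σ hσ (ofVec (Q l)) (aa i) ∘ₗ LinearMap.proj l)
    fun μ => by simpa using hPβ ⟨i, μ⟩
  have hVlt := sum_finrank_lt_of_evalOp_eq_zero σ hfix ha0 haconj D P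
    (fun u => ofVec_add_sum_skewMulF_apply_of_le σ hk hkD Q0 Q M) hP0 V
    fun i _ hb => hVP i hb
  have hVn : ∑ i, finrank K (V i) + t = n := by
    rw [← ht, hn, wtM, ← Finset.sum_add_distrib]
    exact Finset.sum_congr rfl fun i _ => (hVrank i).trans (Fintype.card_fin _)
  have hDt := add_mul_pred_div_add_le hk hkn hdec
  omega

/-- Decoding radius: `P = 0`.
If `R = C(M) + E` with `(s+1)·wt_ΣR(E) < s·(n−k+1)`,
`D = ⌈(n + s(k−1) + 1)/(s+1)⌉`, and `(Q_0, Q_1, …, Q_s)` is a nonzero degree-restricted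
tuple satisfying the interpolation conditions for `R`, then
`P = Q_0 + Σ_l Q_l ∗ f^(l)` is identically zero (`f^(l)` the `l`-th row of `M`). -/
theorem P_eq_zero
    {K F : Type} [Field K] [Field F] [Algebra K F] [Fintype K] [Fintype F]
    (σ : F ≃+* F)
    (hfix : ∀ x : F, σ x = x ↔ x ∈ Set.range (algebraMap K F))
    {ℓ : ℕ} (hℓ : 1 ≤ ℓ) (nn : Fin ℓ → ℕ) (aa : Fin ℓ → F)
    (ha0 : ∀ i, aa i ≠ 0)
    (haconj : ∀ i j : Fin ℓ, i ≠ j → ¬ SConj σ (aa i) (aa j))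
    (β : (Σ i : Fin ℓ, Fin (nn i)) → F)
    (hβ : ∀ i, LinearIndependent K fun μ : Fin (nn i) => β ⟨i, μ⟩)
    {s : ℕ} (hs : 1 ≤ s) {k n t : ℕ} (hn : n = ∑ i, nn i)
    (hk : 1 ≤ k) (hkn : k ≤ n)
    (M : Matrix (Fin s) (Fin k) F)
    (E R : Matrix (Fin s) (Σ i : Fin ℓ, Fin (nn i)) F)
    (hR : R = codeword σ nn aa β k M + E)
    (ht : wtM K nn E = t)
    (hdec : (s + 1) * t < s * (n - k + 1))
    {D : ℕ} (hD : D = (n + s * (k - 1) + 1 + s) / (s + 1))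
    (Q0 : Fin D → F) (Q : Fin s → Fin (D - k + 1) → F)
    (hnz : ¬ (Q0 = 0 ∧ ∀ l : Fin s, Q l = 0))
    (hint : ∀ p : Σ i : Fin ℓ, Fin (nn i),
      evalOp σ (ofVec Q0) (aa p.1) (β p)
        + ∑ l : Fin s, evalOp σ (ofVec (Q l)) (aa p.1) (R l p) = 0) :
    ofVec Q0 + ∑ l : Fin s, skewMulF σ (ofVec (Q l)) (ofVec (M l)) = 0 :=
  P_eq_zero_general σ hfix nn aa ha0 haconj β hβ hn hk hkn M E R hR ht hdec hD Q0 Q hint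

end Stmt13
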